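/- For every s with r ≤ s ≤ n-1 and every i with 0 ≤ i ≤ n-1, the p-th convolution power of z_{p^s} satisfies z_{p^s}^p(t^{p^i}) = f^{p^{s-r}}·δ_{i,s-r} (equal to f^{p^{s-r}} if i = s-r, and 0 otherwise); in particular z_{p^s}^p ≠ 0 in H for r ≤ s ≤ n-1. -/

import Mathlib

open Polynomial TensorProduct

noncomputable section

/-- The truncated polynomial algebra `K[t]/(t^{p^n})`, underlying the Hopf algebra
`H_{n,r,f}`. -/
abbrev TruncAlg (K : Type) [Field K] (p n : ℕ) : Type :=
  AdjoinRoot (X ^ p ^ n : K[X])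

/-- `t`, the image of `X` in `K[t]/(t^{p^n})`. -/
def tgen (K : Type) [Field K] (p n : ℕ) : TruncAlg K p n :=
  AdjoinRoot.root _

/-- The basis `1, t, t^2, …, t^{p^n-1}` of `K[t]/(t^{p^n})`. -/
def tbasis (K : Type) [Field K] (p n : ℕ) :
    Module.Basis (Fin (p ^ n)) K (TruncAlg K p n) :=
  (AdjoinRoot.powerBasis (f := (X ^ p ^ n : K[X]))
    (pow_ne_zero _ Polynomial.X_ne_zero)).basis.reindex
    (finCongr (by simp))

/-- The dual basis functional `z_j ∈ H = H_{n,r,f}^*`, with `z_j (t^i) = δ_{ij}`;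
junk value `0` out of range. -/
def zdual (K : Type) [Field K] (p n : ℕ) (j : ℕ) :
    Module.Dual K (TruncAlg K p n) :=
  if h : j < p ^ n then (tbasis K p n).coord ⟨j, h⟩ else 0

/-- The coefficient `1/(ℓ!(p-ℓ)!)`, computed in the prime field of `K`. -/
def pfCoeff (K : Type) [Field K] (p ℓ : ℕ) : K :=
  ((ℓ.factorial * (p - ℓ).factorial : ℕ) : K)⁻¹

/-- The element `Δ(t) = t⊗1 + 1⊗t + f Σ_{ℓ=1}^{p-1} (1/(ℓ!(p-ℓ)!)) t^{p^r ℓ} ⊗ t^{p^r (p-ℓ)}`. -/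
def Delta_t (K : Type) [Field K] (p n r : ℕ) (f : K) :
    TruncAlg K p n ⊗[K] TruncAlg K p n :=
  tgen K p n ⊗ₜ 1 + 1 ⊗ₜ tgen K p n +
    f • ∑ ℓ ∈ Finset.Icc 1 (p - 1),
      pfCoeff K p ℓ • ((tgen K p n ^ (p ^ r * ℓ)) ⊗ₜ[K] (tgen K p n ^ (p ^ r * (p - ℓ))))

/-- The comultiplication of `H_{n,r,f}` as a linear map, determined by `Δ(t^i) = Δ(t)^i`
(it is the unique `K`-algebra map with `t ↦ Δ(t)`). -/
def DeltaMap (K : Type) [Field K] (p n r : ℕ) (f : K) :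
    TruncAlg K p n →ₗ[K] TruncAlg K p n ⊗[K] TruncAlg K p n :=
  (tbasis K p n).constr K fun i => (Delta_t K p n r f) ^ (i : ℕ)

/-- Convolution product on `H = (H_{n,r,f})^*`:  `(z * z')(h) = mult ((z ⊗ z')(Δ h))`. -/
def conv (K : Type) [Field K] (p n r : ℕ) (f : K)
    (z z' : Module.Dual K (TruncAlg K p n)) : Module.Dual K (TruncAlg K p n) :=
  (LinearMap.mul' K K) ∘ₗ (TensorProduct.map z z') ∘ₗ DeltaMap K p n r f

/-- Convolution powers; the 0th power is the unit `z_0 = ε` of `H`. -/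
def convPow (K : Type) [Field K] (p n r : ℕ) (f : K)
    (z : Module.Dual K (TruncAlg K p n)) : ℕ → Module.Dual K (TruncAlg K p n)
  | 0 => zdual K p n 0
  | m + 1 => conv K p n r f (convPow K p n r f z m) z

/-- The convolution product `z_1^{j 0} · z_p^{j 1} ⋯ z_{p^{m-1}}^{j (m-1)}` in `H`. -/
def zprod (K : Type) [Field K] (p n r : ℕ) (f : K)
    (j : ℕ → ℕ) : ℕ → Module.Dual K (TruncAlg K p n)
  | 0 => zdual K p n 0
  | m + 1 => conv K p n r f (zprod K p n r f j m)
      (convPow K p n r f (zdual K p n (p ^ m)) (j m))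

/-! In characteristic `p` the Frobenius gives
`Δ(t)^{p^i} = t^{p^i} ⊗ 1 + 1 ⊗ t^{p^i} + f^{p^i} Σ_ℓ c_ℓ t^{p^{r+i} ℓ} ⊗ t^{p^{r+i} (p-ℓ)}`.
For `s ≥ r` the tail vanishes since `p^{r+s} ≥ p^{2r} ≥ p^n`, so `t^{p^s}` is primitive and the
binomial theorem gives `z_{p^s}^m (t^{p^s m}) = m!` for `m < p`. Evaluating
`z_{p^s}^p = z_{p^s}^{p-1} · z_{p^s}` at `t^{p^i}`, the primitive part dies because
`z_{p^s}(1) = 0`, and of the tail only the term `ℓ = p - 1` with `r + i = s` survives; it equals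
`f^{p^i} · (p-1)!⁻¹ · (p-1)! = f^{p^{s-r}}`. -/

theorem Nat.Prime.pow_eq_pow_mul_iff {p a b s : ℕ} (hp : p.Prime) (hb : b < p) :
    p ^ s = p ^ a * b ↔ a = s ∧ b = 1 := by
  constructor
  · intro h
    obtain ⟨k, -, rfl⟩ := (Nat.dvd_prime_pow hp).1 (Dvd.intro_left _ h.symm)
    have hk : k = 0 := by
      by_contra hk
      exact (Nat.le_self_pow hk p).not_gt hb
    subst hk
    rw [pow_zero, mul_one] at h
    exact ⟨(Nat.pow_right_injective hp.two_le h).symm, pow_zero p⟩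
  · rintro ⟨rfl, rfl⟩
    rw [mul_one]

variable {K : Type} [Field K] {p n r : ℕ} {f : K}

theorem tgen_pow_eq_zero {k : ℕ} (hk : p ^ n ≤ k) : tgen K p n ^ k = 0 := by
  rw [← Nat.add_sub_cancel' hk, pow_add, tgen, ← AdjoinRoot.mk_X, ← map_pow, AdjoinRoot.mk_self,
    zero_mul]

theorem tbasis_apply (k : Fin (p ^ n)) : tbasis K p n k = tgen K p n ^ (k : ℕ) := by
  simp [tbasis, tgen, finCongr]

theorem zdual_apply_tgen_pow {j : ℕ} (hj : j < p ^ n) (k : ℕ) :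
    zdual K p n j (tgen K p n ^ k) = if j = k then 1 else 0 := by
  rw [zdual, dif_pos hj]
  by_cases hk : k < p ^ n
  · rw [← tbasis_apply ⟨k, hk⟩, Module.Basis.coord_apply, Module.Basis.repr_self]
    simp [Finsupp.single_apply, Fin.ext_iff, eq_comm]
  · rw [tgen_pow_eq_zero (not_lt.1 hk), map_zero, if_neg (by omega)]

theorem conv_apply_tgen_pow {k : ℕ} (hk : k < p ^ n) (z z' : Module.Dual K (TruncAlg K p n)) :
    conv K p n r f z z' (tgen K p n ^ k) =
      LinearMap.mul' K K (TensorProduct.map z z' (Delta_t K p n r f ^ k)) := by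
  rw [conv, LinearMap.comp_apply, LinearMap.comp_apply, ← tbasis_apply ⟨k, hk⟩, DeltaMap,
    Module.Basis.constr_basis]

theorem convPow_succ (z : Module.Dual K (TruncAlg K p n)) (m : ℕ) :
    convPow K p n r f z (m + 1) = conv K p n r f (convPow K p n r f z m) z :=
  rfl

section CharP

variable [Fact p.Prime]

instance TruncAlg.nontrivial : Nontrivial (TruncAlg K p n) :=
  nontrivial_of_ne _ _ ((tbasis K p n).ne_zero ⟨0, pow_pos (Fact.out : p.Prime).pos n⟩)

theorem conv_apply_one (z z' : Module.Dual K (TruncAlg K p n)) :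
    conv K p n r f z z' 1 = z 1 * z' 1 := by
  simpa [Algebra.TensorProduct.one_def] using
    conv_apply_tgen_pow (r := r) (f := f) (pow_pos (Fact.out : p.Prime).pos n) z z'

variable [CharP K p]

instance TruncAlg.charP_tensorProduct : CharP (TruncAlg K p n ⊗[K] TruncAlg K p n) p :=
  charP_of_injective_algebraMap' K p

theorem pfCoeff_pow_prime_pow (ℓ i : ℕ) : pfCoeff K p ℓ ^ p ^ i = pfCoeff K p ℓ := by
  rw [pfCoeff, inv_pow, ← iterateFrobenius_def, map_natCast]

theorem Delta_t_pow_prime_pow (i : ℕ) :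
    Delta_t K p n r f ^ p ^ i =
      (tgen K p n ^ p ^ i) ⊗ₜ[K] 1 + 1 ⊗ₜ[K] (tgen K p n ^ p ^ i) +
        f ^ p ^ i • ∑ ℓ ∈ Finset.Icc 1 (p - 1), pfCoeff K p ℓ •
          ((tgen K p n ^ (p ^ (r + i) * ℓ)) ⊗ₜ[K] (tgen K p n ^ (p ^ (r + i) * (p - ℓ)))) := by
  simp only [Delta_t, add_pow_char_pow, _root_.smul_pow, sum_pow_char_pow, pfCoeff_pow_prime_pow,
    Algebra.TensorProduct.tmul_pow, one_pow, ← pow_mul]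
  ring_nf

theorem Delta_t_pow_prime_pow_of_le {s : ℕ} (hs : n ≤ r + s) :
    Delta_t K p n r f ^ p ^ s = (tgen K p n ^ p ^ s) ⊗ₜ[K] 1 + 1 ⊗ₜ[K] (tgen K p n ^ p ^ s) := by
  have hp : p.Prime := Fact.out
  rw [Delta_t_pow_prime_pow, add_eq_left]
  refine smul_eq_zero_of_right _ (Finset.sum_eq_zero fun ℓ hℓ => ?_)
  have hle : p ^ n ≤ p ^ (r + s) * ℓ :=
    (Nat.pow_le_pow_right hp.pos hs).trans (Nat.le_mul_of_pos_right _ (Finset.mem_Icc.1 hℓ).1)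
  rw [tgen_pow_eq_zero hle, TensorProduct.zero_tmul, smul_zero]

theorem conv_apply_tgen_prime_pow {i : ℕ} (hi : i < n) (z z' : Module.Dual K (TruncAlg K p n)) :
    conv K p n r f z z' (tgen K p n ^ p ^ i) =
      z (tgen K p n ^ p ^ i) * z' 1 + z 1 * z' (tgen K p n ^ p ^ i) +
        f ^ p ^ i * ∑ ℓ ∈ Finset.Icc 1 (p - 1), pfCoeff K p ℓ *
          (z (tgen K p n ^ (p ^ (r + i) * ℓ)) * z' (tgen K p n ^ (p ^ (r + i) * (p - ℓ)))) := by
  rw [conv_apply_tgen_pow (Nat.pow_lt_pow_right (Fact.out : p.Prime).one_lt hi),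
    Delta_t_pow_prime_pow]
  simp only [map_add, map_smul, map_sum, TensorProduct.map_tmul, LinearMap.mul'_apply,
    smul_eq_mul]

theorem conv_apply_tgen_prime_pow_mul {s a : ℕ} (hs : n ≤ r + s) (ha : p ^ s * a < p ^ n)
    (z z' : Module.Dual K (TruncAlg K p n)) :
    conv K p n r f z z' (tgen K p n ^ (p ^ s * a)) =
      ∑ k ∈ Finset.range (a + 1),
        a.choose k * (z (tgen K p n ^ (p ^ s * k)) * z' (tgen K p n ^ (p ^ s * (a - k)))) := by
  rw [conv_apply_tgen_pow ha, pow_mul, Delta_t_pow_prime_pow_of_le hs, add_pow]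
  simp only [map_sum, Algebra.TensorProduct.tmul_pow, one_pow, Algebra.TensorProduct.tmul_mul_tmul,
    mul_one, one_mul, ← pow_mul, ← Nat.cast_comm, ← nsmul_eq_mul, map_nsmul,
    TensorProduct.map_tmul, LinearMap.mul'_apply]

end CharP

section ConvPowZdual

variable [Fact p.Prime] {s : ℕ}

theorem zdual_prime_pow_apply_one (hs : s < n) : zdual K p n (p ^ s) 1 = 0 := by
  have hp : p.Prime := Fact.out
  rw [← pow_zero (tgen K p n), zdual_apply_tgen_pow (Nat.pow_lt_pow_right hp.one_lt hs),
    if_neg (pow_ne_zero s hp.ne_zero)]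

theorem zdual_prime_pow_apply_tgen_pow_mul (hs : s < n) {a b : ℕ} (hb : b < p) :
    zdual K p n (p ^ s) (tgen K p n ^ (p ^ a * b)) = if a = s ∧ b = 1 then 1 else 0 := by
  have hp : p.Prime := Fact.out
  rw [zdual_apply_tgen_pow (Nat.pow_lt_pow_right hp.one_lt hs)]
  exact if_congr (hp.pow_eq_pow_mul_iff hb) rfl rfl

theorem convPow_zdual_prime_pow_succ_apply_one (hs : s < n) (m : ℕ) :
    convPow K p n r f (zdual K p n (p ^ s)) (m + 1) 1 = 0 := by
  rw [convPow_succ, conv_apply_one, zdual_prime_pow_apply_one hs, mul_zero]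

variable [CharP K p]

theorem convPow_zdual_prime_pow_apply_tgen_pow_mul (hnrs : n ≤ r + s) (hs : s < n) {m : ℕ}
    (hm : m < p) :
    convPow K p n r f (zdual K p n (p ^ s)) m (tgen K p n ^ (p ^ s * m)) = m.factorial := by
  have hp : p.Prime := Fact.out
  induction m with
  | zero =>
    rw [mul_zero, convPow, zdual_apply_tgen_pow (pow_pos hp.pos n), if_pos rfl, Nat.factorial_zero,
      Nat.cast_one]
  | succ m ih =>
    have hlt : p ^ s * (m + 1) < p ^ n :=
      calc p ^ s * (m + 1) < p ^ s * p := Nat.mul_lt_mul_of_pos_left hm (pow_pos hp.pos s)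
        _ = p ^ (s + 1) := (pow_succ p s).symm
        _ ≤ p ^ n := Nat.pow_le_pow_right hp.pos hs
    rw [convPow_succ, conv_apply_tgen_prime_pow_mul hnrs hlt, Finset.sum_eq_single_of_mem m
      (Finset.mem_range.2 (by omega)), Nat.add_sub_cancel_left, ih (by omega),
      zdual_prime_pow_apply_tgen_pow_mul hs hp.one_lt, if_pos ⟨rfl, rfl⟩,
      Nat.choose_succ_self_right, Nat.factorial_succ]
    · push_cast
      ring
    · intro k hk hkm
      rw [zdual_prime_pow_apply_tgen_pow_mul hs (by omega), if_neg (by omega), mul_zero, mul_zero]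

theorem pfCoeff_prime_sub_one_mul_factorial :
    pfCoeff K p (p - 1) * (p - 1).factorial = 1 := by
  have hp : p.Prime := Fact.out
  have hfac : ((p - 1).factorial : K) ≠ 0 := by
    rw [Ne, CharP.cast_eq_zero_iff K p, hp.dvd_factorial]
    have := hp.pos
    omega
  rw [pfCoeff, Nat.sub_sub_self hp.one_le, Nat.factorial_one, mul_one, inv_mul_cancel₀ hfac]

theorem convPow_zdual_prime_pow_prime_apply_tgen_prime_pow (hnrs : n ≤ r + s) (hrs : r ≤ s)
    (hs : s < n) {i : ℕ} (hi : i < n) :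
    convPow K p n r f (zdual K p n (p ^ s)) p (tgen K p n ^ p ^ i) =
      if i = s - r then f ^ p ^ (s - r) else 0 := by
  have hp : p.Prime := Fact.out
  have hp2 := hp.two_le
  obtain ⟨m, hm⟩ : ∃ m, p - 1 = m + 1 := ⟨p - 2, by omega⟩
  set z := zdual K p n (p ^ s)
  set w := convPow K p n r f z (p - 1)
  have hw : convPow K p n r f z p = conv K p n r f w z := by
    rw [← convPow_succ, Nat.sub_add_cancel hp.one_le]
  have hw1 : w 1 = 0 := by
    simp only [w, hm]
    exact convPow_zdual_prime_pow_succ_apply_one hs m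
  have hsum : ∑ ℓ ∈ Finset.Icc 1 (p - 1), pfCoeff K p ℓ *
      (w (tgen K p n ^ (p ^ (r + i) * ℓ)) * z (tgen K p n ^ (p ^ (r + i) * (p - ℓ)))) =
      if r + i = s then 1 else 0 := by
    rw [Finset.sum_eq_single_of_mem (p - 1) (Finset.mem_Icc.2 ⟨by omega, le_rfl⟩)]
    · rw [zdual_prime_pow_apply_tgen_pow_mul hs (by omega), Nat.sub_sub_self hp.one_le]
      simp only [and_true]
      split_ifs with h
      · rw [h, convPow_zdual_prime_pow_apply_tgen_pow_mul hnrs hs (by omega), mul_one,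
          pfCoeff_prime_sub_one_mul_factorial]
      · rw [mul_zero, mul_zero]
    · intro ℓ hℓ hne
      have := Finset.mem_Icc.1 hℓ
      rw [zdual_prime_pow_apply_tgen_pow_mul hs (by omega), if_neg (by omega), mul_zero, mul_zero]
  rw [hw, conv_apply_tgen_prime_pow hi, zdual_prime_pow_apply_one hs, hw1, hsum]
  by_cases h : i = s - r
  · rw [if_pos (by omega), if_pos h, h]
    ring
  · rw [if_neg (by omega), if_neg h]
    ring

end ConvPowZdual

theorem convPow_zdual_p_apply_general
    (p : ℕ) [Fact p.Prime] (F : Type) [Field F] [CharP F p]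
    (n r : ℕ) (hn2r : n ≤ 2 * r)
    (f : LaurentSeries F) (hf : f ≠ 0) :
    ∀ s : ℕ, r ≤ s → s < n →
      (∀ i : ℕ, i < n →
        convPow (LaurentSeries F) p n r f (zdual (LaurentSeries F) p n (p ^ s)) p
            (tgen (LaurentSeries F) p n ^ (p ^ i))
          = if i = s - r then f ^ (p ^ (s - r)) else 0) ∧
      convPow (LaurentSeries F) p n r f (zdual (LaurentSeries F) p n (p ^ s)) p ≠ 0 := by
  have : CharP (LaurentSeries F) p :=
    charP_of_injective_algebraMap (algebraMap F (LaurentSeries F)).injective p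
  intro s hrs hs
  have happly := fun i (hi : i < n) ↦
    convPow_zdual_prime_pow_prime_apply_tgen_prime_pow (f := f) (by omega) hrs hs hi
  refine ⟨happly, fun h0 ↦ ?_⟩
  have hval := happly (s - r) (by omega)
  rw [h0, if_pos rfl, LinearMap.zero_apply] at hval
  exact pow_ne_zero _ hf hval.symm

/-- In `H = H_{n,r,f}^*`, for `r ≤ s ≤ n-1` and `0 ≤ i ≤ n-1`,
the convolution power `z_{p^s}^p` satisfies `z_{p^s}^p(t^{p^i}) = f^{p^{s-r}}·δ_{i,s-r}`;
in particular `z_{p^s}^p ≠ 0`. -/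
theorem convPow_zdual_p_apply
    (p : ℕ) [Fact p.Prime] (F : Type) [Field F] [Fintype F] [CharP F p]
    (n r : ℕ) (hr : 0 < r) (hrn : r < n) (hn2r : n ≤ 2 * r)
    (f : LaurentSeries F) (hf : f ≠ 0) :
    ∀ s : ℕ, r ≤ s → s < n →
      (∀ i : ℕ, i < n →
        convPow (LaurentSeries F) p n r f (zdual (LaurentSeries F) p n (p ^ s)) p
            (tgen (LaurentSeries F) p n ^ (p ^ i))
          = if i = s - r then f ^ (p ^ (s - r)) else 0) ∧
      convPow (LaurentSeries F) p n r f (zdual (LaurentSeries F) p n (p ^ s)) p ≠ 0 :=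
  convPow_zdual_p_apply_general p F n r hn2r f hf

end
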